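/- If u : ℝ × ℝ → ℝ is smooth and satisfies u_xy = u, then for every k ∈ ℕ the function obtained by applying the operator J = x∂x - y∂y to u iteratively k times still satisfies the equation: (J^k u)_xy = J^k u everywhere. -/

import Mathlib

noncomputable def pdx (f : ℝ × ℝ → ℝ) : ℝ × ℝ → ℝ := fun p => fderiv ℝ f p (1, 0)
noncomputable def pdy (f : ℝ × ℝ → ℝ) : ℝ × ℝ → ℝ := fun p => fderiv ℝ f p (0, 1)
noncomputable def J (f : ℝ × ℝ → ℝ) : ℝ × ℝ → ℝ :=
  fun p => p.1 * pdx f p - p.2 * pdy f p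

-- smoothness of directional derivative
lemma pd_smooth {f : ℝ × ℝ → ℝ} (hf : ContDiff ℝ (⊤ : ℕ∞) f) (v : ℝ × ℝ) :
    ContDiff ℝ (⊤ : ℕ∞) (fun p => fderiv ℝ f p v) :=
  (hf.fderiv_right (by simp)).clm_apply contDiff_const

lemma pdx_smooth {f : ℝ × ℝ → ℝ} (hf : ContDiff ℝ (⊤ : ℕ∞) f) : ContDiff ℝ (⊤ : ℕ∞) (pdx f) :=
  pd_smooth hf _

lemma pdy_smooth {f : ℝ × ℝ → ℝ} (hf : ContDiff ℝ (⊤ : ℕ∞) f) : ContDiff ℝ (⊤ : ℕ∞) (pdy f) :=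
  pd_smooth hf _

lemma J_smooth {f : ℝ × ℝ → ℝ} (hf : ContDiff ℝ (⊤ : ℕ∞) f) : ContDiff ℝ (⊤ : ℕ∞) (J f) :=
  (contDiff_fst.mul (pdx_smooth hf)).sub (contDiff_snd.mul (pdy_smooth hf))

-- derivative of directional derivative = second derivative (with swap via symmetry)
lemma pd_comm {f : ℝ × ℝ → ℝ} (hf : ContDiff ℝ (⊤ : ℕ∞) f) (p v w : ℝ × ℝ) :
    fderiv ℝ (fun q => fderiv ℝ f q v) p w = fderiv ℝ (fun q => fderiv ℝ f q w) p v := by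
  have hd : ContDiff ℝ (⊤ : ℕ∞) (fderiv ℝ f) := hf.fderiv_right (by simp)
  have h1 : ∀ z : ℝ × ℝ, fderiv ℝ (fun q => fderiv ℝ f q z) p
      = (fderiv ℝ (fderiv ℝ f) p).flip z := by
    intro z
    have := fderiv_clm_apply (c := fderiv ℝ f) (u := fun _ => z)
      (hd.differentiable (by simp) p) (differentiableAt_const z)
    simpa using this
  rw [h1 v, h1 w]
  have hsymm : ∀ a b, fderiv ℝ (fderiv ℝ f) p a b = fderiv ℝ (fderiv ℝ f) p b a := by
    intro a b
    exact second_derivative_symmetric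
      (fun y => (hf.differentiable (by simp) y).hasFDerivAt)
      ((hd.differentiable (by simp) p).hasFDerivAt) a b
  simp [ContinuousLinearMap.flip_apply, hsymm]

lemma pdxy_comm {f : ℝ × ℝ → ℝ} (hf : ContDiff ℝ (⊤ : ℕ∞) f) (p : ℝ × ℝ) :
    pdx (pdy f) p = pdy (pdx f) p := by
  exact pd_comm hf p (0, 1) (1, 0)

lemma pd_J {f : ℝ × ℝ → ℝ} (hf : ContDiff ℝ (⊤ : ℕ∞) f) (p v : ℝ × ℝ) :
    fderiv ℝ (J f) p v =
      v.1 * pdx f p + p.1 * fderiv ℝ (pdx f) p v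
        - (v.2 * pdy f p + p.2 * fderiv ℝ (pdy f) p v) := by
  have hx := (pdx_smooth hf).differentiable (by simp) p
  have hy := (pdy_smooth hf).differentiable (by simp) p
  have h : HasFDerivAt (J f)
      ((p.1 • fderiv ℝ (pdx f) p + pdx f p • ContinuousLinearMap.fst ℝ ℝ ℝ)
        - (p.2 • fderiv ℝ (pdy f) p + pdy f p • ContinuousLinearMap.snd ℝ ℝ ℝ)) p :=
    (hasFDerivAt_fst.mul hx.hasFDerivAt).sub (hasFDerivAt_snd.mul hy.hasFDerivAt)
  rw [h.fderiv]
  simp [ContinuousLinearMap.sub_apply, ContinuousLinearMap.add_apply,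
    ContinuousLinearMap.smul_apply, ContinuousLinearMap.fst, ContinuousLinearMap.snd]
  ring

lemma pdx_J_eq {f : ℝ × ℝ → ℝ} (hf : ContDiff ℝ (⊤ : ℕ∞) f) :
    pdx (J f) = fun q => pdx f q + q.1 * pdx (pdx f) q - q.2 * pdx (pdy f) q := by
  funext q
  have := pd_J hf q (1, 0)
  simp only [pdx] at this ⊢
  rw [this]
  ring

lemma Jf_xy {f : ℝ × ℝ → ℝ} (hf : ContDiff ℝ (⊤ : ℕ∞) f) (p : ℝ × ℝ) :
    pdy (pdx (J f)) p = J (pdy (pdx f)) p := by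
  have ha := (pdx_smooth hf).differentiable (by simp) p
  have hb := (pdx_smooth (pdx_smooth hf)).differentiable (by simp) p
  have hc := (pdx_smooth (pdy_smooth hf)).differentiable (by simp) p
  have h : HasFDerivAt (fun q : ℝ × ℝ => pdx f q + q.1 * pdx (pdx f) q - q.2 * pdx (pdy f) q)
      ((fderiv ℝ (pdx f) p
        + (p.1 • fderiv ℝ (pdx (pdx f)) p + pdx (pdx f) p • ContinuousLinearMap.fst ℝ ℝ ℝ))
        - (p.2 • fderiv ℝ (pdx (pdy f)) p + pdx (pdy f) p • ContinuousLinearMap.snd ℝ ℝ ℝ)) p :=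
    (ha.hasFDerivAt.add (hasFDerivAt_fst.mul hb.hasFDerivAt)).sub
      (hasFDerivAt_snd.mul hc.hasFDerivAt)
  have hxy : pdy (pdx (J f)) p
      = pdy (pdx f) p + p.1 * pdy (pdx (pdx f)) p
        - (pdx (pdy f) p + p.2 * pdy (pdx (pdy f)) p) := by
    rw [pdx_J_eq hf]
    show fderiv ℝ _ p (0, 1) = _
    rw [h.fderiv]
    simp [pdy, ContinuousLinearMap.sub_apply, ContinuousLinearMap.add_apply,
      ContinuousLinearMap.smul_apply, ContinuousLinearMap.fst, ContinuousLinearMap.snd]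
    ring
  rw [hxy]
  have e1 : pdx (pdy f) p = pdy (pdx f) p := pdxy_comm hf p
  have e2 : pdx (pdy (pdx f)) p = pdy (pdx (pdx f)) p := pdxy_comm (pdx_smooth hf) p
  have e3 : pdy (pdx (pdy f)) p = pdy (pdy (pdx f)) p := by
    congr 1
    funext q
    exact pdxy_comm hf q
  rw [e1, e3, J, ← e2]
  ring

theorem stmt14 (u : ℝ × ℝ → ℝ) (hu : ContDiff ℝ (⊤ : ℕ∞) u)
    (heq : ∀ p, pdy (pdx u) p = u p) (k : ℕ) :
    ∀ p : ℝ × ℝ, pdy (pdx (J^[k] u)) p = (J^[k] u) p := by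
  induction k with
  | zero => simpa using heq
  | succ n ih =>
    have hsmooth : ∀ m : ℕ, ContDiff ℝ (⊤ : ℕ∞) (J^[m] u) := by
      intro m
      induction m with
      | zero => simpa using hu
      | succ j ihj => rw [Function.iterate_succ_apply']; exact J_smooth ihj
    intro p
    rw [Function.iterate_succ_apply', Jf_xy (hsmooth n) p]
    have : pdy (pdx (J^[n] u)) = J^[n] u := funext ih
    rw [this]
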